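/- Assume (g1) and (g3) for the numerical Hamiltonian g. Then for any grid function v, any grid function m with m_{i,j} > 0 for all i,j, and any η > 0: Σ_{i,j} 𝒯_{i,j}(v, m) ln(m_{i,j}) ≤ (η/2) Σ_{i,j} [∇_h ln(m)]_{i,j} · [∇_h m]_{i,j} + (1/(2η)) Σ_{i,j} m_{i,j} |∇_q g(x_{i,j}, [∇_h v]_{i,j})|², where ln(m) denotes the grid function (ln m_{i,j})_{i,j} and |·| is the Euclidean norm on ℝ⁴. -/

import Mathlib

open Finset

noncomputable section

abbrev Torus : Type := AddCircle (1:ℝ) × AddCircle (1:ℝ)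

/-- The grid step `h = 1/N_h`. -/
def gridh (N : ℕ) : ℝ := 1 / N

/-- The grid point `x_{i,j} = (ih, jh)` on the torus. -/
def gridPt (N : ℕ) (i j : ZMod N) : Torus :=
  (((i.val : ℝ) * gridh N : ℝ), ((j.val : ℝ) * gridh N : ℝ))

/-- Forward difference in the first direction. -/
def D1 {N : ℕ} (v : ZMod N → ZMod N → ℝ) (i j : ZMod N) : ℝ :=
  (v (i + 1) j - v i j) / gridh N

/-- Forward difference in the second direction. -/
def D2 {N : ℕ} (v : ZMod N → ZMod N → ℝ) (i j : ZMod N) : ℝ :=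
  (v i (j + 1) - v i j) / gridh N

/-- `[∇_h v]_{i,j} ∈ ℝ⁴`. -/
def nablah {N : ℕ} (v : ZMod N → ZMod N → ℝ) (i j : ZMod N) : Fin 4 → ℝ :=
  ![D1 v i j, D1 v (i - 1) j, D2 v i j, D2 v i (j - 1)]

/-- The five-point discrete Laplacian. -/
def laph {N : ℕ} (v : ZMod N → ZMod N → ℝ) (i j : ZMod N) : ℝ :=
  -(4 * v i j - v (i + 1) j - v (i - 1) j - v i (j + 1) - v i (j - 1)) / (gridh N) ^ 2

/-- Scalar product on ℝ⁴. -/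
def dot4 (p q : Fin 4 → ℝ) : ℝ := p 0 * q 0 + p 1 * q 1 + p 2 * q 2 + p 3 * q 3

/-- Euclidean norm on ℝ⁴. -/
def norm4 (p : Fin 4 → ℝ) : ℝ := Real.sqrt (dot4 p p)

/-- The discrete transport operator `𝒯_{i,j}(u,m)`. -/
def Transp {N : ℕ} (gq : Torus → (Fin 4 → ℝ) → (Fin 4 → ℝ))
    (u m : ZMod N → ZMod N → ℝ) (i j : ZMod N) : ℝ :=
  (1 / gridh N) *
    ((m i j * gq (gridPt N i j) (nablah u i j) 0
        - m (i - 1) j * gq (gridPt N (i - 1) j) (nablah u (i - 1) j) 0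
        + m (i + 1) j * gq (gridPt N (i + 1) j) (nablah u (i + 1) j) 1
        - m i j * gq (gridPt N i j) (nablah u i j) 1)
      + (m i j * gq (gridPt N i j) (nablah u i j) 2
        - m i (j - 1) * gq (gridPt N i (j - 1)) (nablah u i (j - 1)) 2
        + m i (j + 1) * gq (gridPt N i (j + 1)) (nablah u i (j + 1)) 3
        - m i j * gq (gridPt N i j) (nablah u i j) 3))

/-- Membership in the set `𝒦_h` of discrete probability densities. -/
def inKh {N : ℕ} [NeZero N] (m : ZMod N → ZMod N → ℝ) : Prop :=
  (∀ i j, 0 ≤ m i j) ∧ (gridh N) ^ 2 * ∑ i, ∑ j, m i j = 1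

/-- (g1): monotonicity of the numerical Hamiltonian. -/
def Hg1 (g : Torus → (Fin 4 → ℝ) → ℝ) : Prop :=
  ∀ x (q : Fin 4 → ℝ) (s t : ℝ), s ≤ t →
    g x (Function.update q 0 t) ≤ g x (Function.update q 0 s) ∧
    g x (Function.update q 2 t) ≤ g x (Function.update q 2 s) ∧
    g x (Function.update q 1 s) ≤ g x (Function.update q 1 t) ∧
    g x (Function.update q 3 s) ≤ g x (Function.update q 3 t)

/-- (g2): consistency with the Hamiltonian `H`. -/
def Hg2 (g : Torus → (Fin 4 → ℝ) → ℝ) (H : Torus → ℝ × ℝ → ℝ) : Prop :=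
  ∀ x (q1 q2 : ℝ), g x ![q1, q1, q2, q2] = H x (q1, q2)

/-- (g3): regularity; `g` is continuous and C¹ w.r.t. `q`, with `q`-gradient `gq`. -/
def Hg3 (g : Torus → (Fin 4 → ℝ) → ℝ) (gq : Torus → (Fin 4 → ℝ) → (Fin 4 → ℝ)) : Prop :=
  Continuous (fun p : Torus × (Fin 4 → ℝ) => g p.1 p.2) ∧
  (∀ x, ContDiff ℝ 1 (g x)) ∧
  (∀ x (q : Fin 4 → ℝ) (i : Fin 4),
      HasDerivAt (fun t => g x (Function.update q i t)) (gq x q i) (q i))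

/-- (g4): convexity of `q ↦ g(x,q)`. -/
def Hg4 (g : Torus → (Fin 4 → ℝ) → ℝ) : Prop :=
  ∀ x, ConvexOn ℝ Set.univ (g x)

/-- (g5): the growth conditions. -/
def Hg5 (g : Torus → (Fin 4 → ℝ) → ℝ) (gq : Torus → (Fin 4 → ℝ) → (Fin 4 → ℝ)) : Prop :=
  ∃ c1 c2 c3 c4 : ℝ, 0 < c1 ∧ 0 < c2 ∧ 0 < c3 ∧ 0 < c4 ∧
    ∀ x q, c1 * (norm4 (gq x q)) ^ 2 - c2 ≤ dot4 (gq x q) q - g x q ∧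
      norm4 (gq x q) ≤ c3 * norm4 q + c4

/-- The discrete Bellman equations. -/
def BellmanEq {N : ℕ} (g : Torus → (Fin 4 → ℝ) → ℝ) (ν Δt : ℝ) (F : ℝ → ℝ)
    (u m : ℕ → ZMod N → ZMod N → ℝ) (NT : ℕ) : Prop :=
  ∀ k < NT, ∀ i j, (u (k + 1) i j - u k i j) / Δt - ν * laph (u (k + 1)) i j
    + g (gridPt N i j) (nablah (u (k + 1)) i j) = F (m k i j)

/-- The discrete Fokker–Planck equations. -/
def FPEq {N : ℕ} (gq : Torus → (Fin 4 → ℝ) → (Fin 4 → ℝ)) (ν Δt : ℝ)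
    (u m : ℕ → ZMod N → ZMod N → ℝ) (NT : ℕ) : Prop :=
  ∀ k < NT, ∀ i j, (m (k + 1) i j - m k i j) / Δt + ν * laph (m k) i j
    + Transp gq (u (k + 1)) (m k) i j = 0

/-!
Summation by parts turns `∑ 𝒯(v, m) ln m` into `-∑ m ∇_q g · ∇_h ln m`. By (g1) every component
of `∇_q g` has the upwind sign, so in each of the four terms the difference `ln a - ln b` of
`ln m` between a neighbour `a` and the node `b` only counts through its positive part, weighted
by the mass `b` at the node. Since `ln x ≤ x - 1` gives `b (ln a - ln b)₊² ≤ (ln a - ln b)(a - b)`,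
Young's inequality with parameter `η` bounds each term.
-/

lemma gridh_pos (N : ℕ) [NeZero N] : 0 < gridh N :=
  one_div_pos.mpr (Nat.cast_pos.mpr (NeZero.pos N))

lemma norm4_sq (p : Fin 4 → ℝ) : norm4 p ^ 2 = dot4 p p := by
  refine Real.sq_sqrt ?_
  unfold dot4
  nlinarith [mul_self_nonneg (p 0), mul_self_nonneg (p 1), mul_self_nonneg (p 2),
    mul_self_nonneg (p 3)]

lemma Hg1.gq_signs {g : Torus → (Fin 4 → ℝ) → ℝ} {gq : Torus → (Fin 4 → ℝ) → (Fin 4 → ℝ)}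
    (hg1 : Hg1 g) (hg3 : Hg3 g gq) (x : Torus) (q : Fin 4 → ℝ) :
    gq x q 0 ≤ 0 ∧ 0 ≤ gq x q 1 ∧ gq x q 2 ≤ 0 ∧ 0 ≤ gq x q 3 :=
  ⟨(hg3.2.2 x q 0).nonpos_of_antitone fun _ _ hst => (hg1 x q _ _ hst).1,
    (hg3.2.2 x q 1).nonneg_of_monotone fun _ _ hst => (hg1 x q _ _ hst).2.2.1,
    (hg3.2.2 x q 2).nonpos_of_antitone fun _ _ hst => (hg1 x q _ _ hst).2.1,
    (hg3.2.2 x q 3).nonneg_of_monotone fun _ _ hst => (hg1 x q _ _ hst).2.2.2⟩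

section SummationByParts

variable {α β R : Type*} [Fintype α] [Fintype β] [CommRing R]

lemma Fintype.sum_mul_sub_shift [AddCommGroup α] (f u : α → R) (c : α) :
    ∑ x, f x * (u (x + c) - u x) = ∑ x, (f (x - c) - f x) * u x := by
  have hshift : ∑ x, f (x - c) * u x = ∑ x, f x * u (x + c) := by
    simpa using (Equiv.subRight c).sum_comp fun x => f x * u (x + c)
  simp only [mul_sub, sub_mul, Finset.sum_sub_distrib, hshift]

lemma Fintype.sum_sum_mul_sub_shift_fst [AddCommGroup α] (f u : α → β → R) (c : α) :
    ∑ i, ∑ j, f i j * (u (i + c) j - u i j) = ∑ i, ∑ j, (f (i - c) j - f i j) * u i j := by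
  rw [Finset.sum_comm, Finset.sum_comm (γ := α) (f := fun i j => (f (i - c) j - f i j) * u i j)]
  exact Finset.sum_congr rfl fun j _ => Fintype.sum_mul_sub_shift (f · j) (u · j) c

lemma Fintype.sum_sum_mul_sub_shift_snd [AddCommGroup β] (f u : α → β → R) (c : β) :
    ∑ i, ∑ j, f i j * (u i (j + c) - u i j) = ∑ i, ∑ j, (f i (j - c) - f i j) * u i j :=
  Finset.sum_congr rfl fun i _ => Fintype.sum_mul_sub_shift (f i) (u i) c

end SummationByParts

open Real in
lemma mul_sq_posPart_log_sub_le {a b : ℝ} (ha : 0 < a) (hb : 0 < b) :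
    b * max (log a - log b) 0 ^ 2 ≤ (log a - log b) * (a - b) := by
  rcases le_total 0 (log a - log b) with ht | ht
  · have hlog : b * (log a - log b) ≤ a - b := by
      have h := log_le_sub_one_of_pos (div_pos ha hb)
      rw [log_div ha.ne' hb.ne', le_sub_iff_add_le, le_div_iff₀ hb] at h
      linear_combination h
    rw [max_eq_left ht]
    nlinarith
  · have hab : a ≤ b := (log_le_log_iff ha hb).1 (by linarith)
    rw [max_eq_right ht]
    nlinarith

open Real in
lemma mul_mul_log_sub_div_le {a b s h η : ℝ} (ha : 0 < a) (hb : 0 < b) (hs : 0 ≤ s)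
    (hh : 0 < h) (hη : 0 < η) :
    b * s * ((log a - log b) / h)
      ≤ η / 2 * ((log a - log b) / h * ((a - b) / h)) + 1 / (2 * η) * (b * s ^ 2) := by
  set t := log a - log b
  set x := max t 0 / h
  have hyoung : 2 * x * s ≤ η * x ^ 2 + η⁻¹ * s ^ 2 := two_mul_le_add_mul_sq hη
  have hx : b * x ^ 2 ≤ t / h * ((a - b) / h) := by
    rw [div_pow, div_mul_div_comm, ← sq, mul_div_assoc']
    exact div_le_div_of_nonneg_right (mul_sq_posPart_log_sub_le ha hb) (sq_nonneg h)
  calc b * s * (t / h) ≤ b * s * x := by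
        gcongr
        exact div_le_div_of_nonneg_right (le_max_left _ _) hh.le
    _ = b / 2 * (2 * x * s) := by ring
    _ ≤ b / 2 * (η * x ^ 2 + η⁻¹ * s ^ 2) := by gcongr
    _ = η / 2 * (b * x ^ 2) + 1 / (2 * η) * (b * s ^ 2) := by field_simp
    _ ≤ η / 2 * (t / h * ((a - b) / h)) + 1 / (2 * η) * (b * s ^ 2) := by gcongr

section Grid

variable {N : ℕ} [NeZero N]

open Real in
lemma neg_mul_dot4_nablah_log_le {m : ZMod N → ZMod N → ℝ} (hm : ∀ i j, 0 < m i j)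
    {G : Fin 4 → ℝ} (hG : G 0 ≤ 0 ∧ 0 ≤ G 1 ∧ G 2 ≤ 0 ∧ 0 ≤ G 3) {η : ℝ} (hη : 0 < η)
    (i j : ZMod N) :
    -(m i j * dot4 G (nablah (fun a b => log (m a b)) i j))
      ≤ η / 2 * dot4 (nablah (fun a b => log (m a b)) i j) (nablah m i j)
        + 1 / (2 * η) * (m i j * norm4 G ^ 2) := by
  obtain ⟨hG0, hG1, hG2, hG3⟩ := hG
  have hh := gridh_pos N
  have h0 := mul_mul_log_sub_div_le (hm (i + 1) j) (hm i j) (neg_nonneg.2 hG0) hh hη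
  have h1 := mul_mul_log_sub_div_le (hm (i - 1) j) (hm i j) hG1 hh hη
  have h2 := mul_mul_log_sub_div_le (hm i (j + 1)) (hm i j) (neg_nonneg.2 hG2) hh hη
  have h3 := mul_mul_log_sub_div_le (hm i (j - 1)) (hm i j) hG3 hh hη
  rw [norm4_sq]
  simp only [dot4, nablah, D1, D2, Matrix.cons_val_zero, Matrix.cons_val_one,
    Matrix.cons_val_two, Matrix.cons_val_three, Matrix.head_cons, Matrix.tail_cons,
    sub_add_cancel]
  linear_combination h0 + h1 + h2 + h3

lemma sum_transp_mul_eq (gq : Torus → (Fin 4 → ℝ) → (Fin 4 → ℝ)) (u m L : ZMod N → ZMod N → ℝ) :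
    ∑ i, ∑ j, Transp gq u m i j * L i j
      = -∑ i, ∑ j, m i j * dot4 (gq (gridPt N i j) (nablah u i j)) (nablah L i j) := by
  set G := fun i j => gq (gridPt N i j) (nablah u i j)
  have e0 := Fintype.sum_sum_mul_sub_shift_fst (fun i j => m i j * G i j 0) L 1
  have e1 := Fintype.sum_sum_mul_sub_shift_fst (fun i j => m i j * G i j 1) L (-1)
  have e2 := Fintype.sum_sum_mul_sub_shift_snd (fun i j => m i j * G i j 2) L 1
  have e3 := Fintype.sum_sum_mul_sub_shift_snd (fun i j => m i j * G i j 3) L (-1)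
  simp only [sub_neg_eq_add, ← sub_eq_add_neg] at e1 e3
  have hT : ∀ i j, Transp gq u m i j * L i j = 1 / gridh N *
      (-((m (i - 1) j * G (i - 1) j 0 - m i j * G i j 0) * L i j)
        + (m (i + 1) j * G (i + 1) j 1 - m i j * G i j 1) * L i j
        - (m i (j - 1) * G i (j - 1) 2 - m i j * G i j 2) * L i j
        + (m i (j + 1) * G i (j + 1) 3 - m i j * G i j 3) * L i j) := by
    intro i j
    simp only [Transp, G]
    ring
  have hdot : ∀ i j, m i j * dot4 (gq (gridPt N i j) (nablah u i j)) (nablah L i j) =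
      1 / gridh N * (m i j * G i j 0 * (L (i + 1) j - L i j)
        - m i j * G i j 1 * (L (i - 1) j - L i j) + m i j * G i j 2 * (L i (j + 1) - L i j)
        - m i j * G i j 3 * (L i (j - 1) - L i j)) := by
    intro i j
    simp only [dot4, nablah, D1, D2, Matrix.cons_val_zero, Matrix.cons_val_one,
      Matrix.cons_val_two, Matrix.cons_val_three, Matrix.head_cons, Matrix.tail_cons,
      sub_add_cancel, G]
    ring
  simp only [hT, hdot, ← Finset.mul_sum, Finset.sum_add_distrib, Finset.sum_sub_distrib,
    Finset.sum_neg_distrib]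
  rw [e0, e1, e2, e3]
  ring

end Grid

/-- Estimate on `Σ 𝒯_{i,j}(v,m) ln(m_{i,j})`. -/
theorem transport_log_estimate (N : ℕ) [NeZero N]
    (g : Torus → (Fin 4 → ℝ) → ℝ) (gq : Torus → (Fin 4 → ℝ) → (Fin 4 → ℝ))
    (hg1 : Hg1 g) (hg3 : Hg3 g gq)
    (v m : ZMod N → ZMod N → ℝ) (hm : ∀ i j, 0 < m i j)
    (η : ℝ) (hη : 0 < η) :
    ∑ i, ∑ j, Transp gq v m i j * Real.log (m i j)
      ≤ (η / 2) * ∑ i, ∑ j,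
          dot4 (nablah (fun a b => Real.log (m a b)) i j) (nablah m i j)
        + (1 / (2 * η)) * ∑ i, ∑ j,
            m i j * (norm4 (gq (gridPt N i j) (nablah v i j))) ^ 2 := by
  calc ∑ i, ∑ j, Transp gq v m i j * Real.log (m i j)
      = ∑ i, ∑ j, -(m i j * dot4 (gq (gridPt N i j) (nablah v i j))
          (nablah (fun a b => Real.log (m a b)) i j)) := by
        simp only [sum_transp_mul_eq, Finset.sum_neg_distrib]
    _ ≤ ∑ i, ∑ j, (η / 2 * dot4 (nablah (fun a b => Real.log (m a b)) i j) (nablah m i j)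
          + 1 / (2 * η) * (m i j * norm4 (gq (gridPt N i j) (nablah v i j)) ^ 2)) := by
        gcongr with i _ j _
        exact neg_mul_dot4_nablah_log_le hm (hg1.gq_signs hg3 _ _) hη i j
    _ = _ := by simp only [Finset.sum_add_distrib, Finset.mul_sum]

end
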